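/- arXiv:2008.04985 — 3 statements merged into one kernel-verified Lean document; each statement's English description precedes it below -/
import Mathlib

section
/- If at least one lot is held at a loss (some T_j < 0), then the tax liability function L_i (zero for u ≥ 0, equal to the minimum-tax allocation value for selling −u dollars when u < 0) takes a negative value at some point and is not convex on ℝ. -/
/-! Selling lot `k` entirely costs `T k * q k < 0`, so `L (-q k) < 0`, while `L` vanishes at `0`
and at `q k`. Convexity would bound `L 0` by the average of `L (-q k)` and `L (q k)`, which is
negative. -/

open Finset

section SaleTaxes

variable {ι : Type*} [Fintype ι] (q T : ι → ℝ)

def saleTaxes (x : ℝ) : Set ℝ :=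
  {t | ∃ s : ι → ℝ, (∀ j, 0 ≤ s j ∧ s j ≤ q j) ∧ ∑ j, s j = x ∧ t = ∑ j, T j * s j}

noncomputable def taxLiability (u : ℝ) : ℝ :=
  if 0 ≤ u then 0 else sInf (saleTaxes q T (-u))

theorem bddBelow_saleTaxes (x : ℝ) : BddBelow (saleTaxes q T x) := by
  refine ⟨∑ j, min (T j) 0 * q j, ?_⟩
  rintro t ⟨s, hs, -, rfl⟩
  refine sum_le_sum fun j _ => ?_
  rcases le_total 0 (T j) with hT | hT
  · rw [min_eq_right hT, zero_mul]
    exact mul_nonneg hT (hs j).1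
  · rw [min_eq_left hT]
    exact mul_le_mul_of_nonpos_left (hs j).2 hT

theorem mul_mem_saleTaxes [DecidableEq ι] (hq : ∀ j, 0 ≤ q j) (k : ι) :
    T k * q k ∈ saleTaxes q T (q k) := by
  refine ⟨Pi.single k (q k), fun j => ?_, ?_, ?_⟩
  · rcases eq_or_ne j k with rfl | hj
    · simp [hq j]
    · simp [hj, hq j]
  · simp [Pi.single_apply]
  · simp [Pi.single_apply]

theorem taxLiability_of_nonneg {u : ℝ} (hu : 0 ≤ u) : taxLiability q T u = 0 :=
  if_pos hu

theorem taxLiability_neg_le (hq : ∀ j, 0 ≤ q j) {k : ι} (hk : 0 < q k) :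
    taxLiability q T (-q k) ≤ T k * q k := by
  classical
  rw [taxLiability, if_neg (by linarith), neg_neg]
  exact csInf_le (bddBelow_saleTaxes q T _) (mul_mem_saleTaxes q T hq k)

end SaleTaxes

theorem not_convexOn_of_lt_of_le {E : Type*} [AddCommGroup E] [Module ℝ E] {s : Set E}
    {f : E → ℝ} {x : E} (hx : x ∈ s) (hx' : -x ∈ s) (hlt : f x < f 0) (hle : f (-x) ≤ f 0) :
    ¬ConvexOn ℝ s f := by
  intro hf
  have hmid := hf.2 hx hx' (by norm_num : (0 : ℝ) ≤ 1 / 2) (by norm_num : (0 : ℝ) ≤ 1 / 2)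
    (by norm_num)
  rw [smul_neg, add_neg_cancel, smul_eq_mul, smul_eq_mul] at hmid
  linarith

/-- If some lot is held at a loss (`T k < 0`), the per-asset tax liability
function takes a negative value somewhere and is not convex on its domain. -/
theorem tax_liability_neg_and_nonconvex_of_loss (m : ℕ) (q T : Fin m → ℝ)
    (hq : ∀ j, 0 < q j) (k : Fin m) (hk : T k < 0) :
    (∃ u : ℝ, (if 0 ≤ u then 0 else
        sInf {t : ℝ | ∃ s : Fin m → ℝ,
          (∀ j, 0 ≤ s j ∧ s j ≤ q j) ∧ (∑ j, s j) = -u ∧ t = ∑ j, T j * s j}) < 0)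
    ∧ ¬ ConvexOn ℝ (Set.Ici (-(∑ j, q j)))
        (fun u : ℝ => if 0 ≤ u then 0 else
          sInf {t : ℝ | ∃ s : Fin m → ℝ,
            (∀ j, 0 ≤ s j ∧ s j ≤ q j) ∧ (∑ j, s j) = -u ∧ t = ∑ j, T j * s j}) := by
  have hq' : ∀ j, 0 ≤ q j := fun j => (hq j).le
  have hloss : taxLiability q T (-q k) < 0 :=
    (taxLiability_neg_le q T hq' (hq k)).trans_lt (mul_neg_of_neg_of_pos hk (hq k))
  have hlot : q k ≤ ∑ j, q j := single_le_sum (fun j _ => hq' j) (mem_univ k)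
  refine ⟨⟨-q k, hloss⟩,
    not_convexOn_of_lt_of_le (f := taxLiability q T) (x := -q k) ?_ ?_ ?_ ?_⟩
  · exact neg_le_neg hlot
  · rw [Set.mem_Ici, neg_neg]
    linarith [hq k]
  · rwa [taxLiability_of_nonneg q T le_rfl]
  · rw [neg_neg, taxLiability_of_nonneg q T (hq k).le, taxLiability_of_nonneg q T le_rfl]
end

section
/- Suppose f: ℝ → ℝ is convex when restricted to (−∞, 0] and convex when restricted to [0, ∞). Then the convex envelope can be computed with sign-restricted combinations: for all x, inf{ θ f(v) + (1−θ) f(w) : θ ∈ [0,1], x = θ v + (1−θ) w } = inf{ θ f(v) + (1−θ) f(w) : θ ∈ [0,1], x = θ v + (1−θ) w, v ≥ 0, w ≤ 0 }. -/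
open Set

/-- If both nodes lie on one half-line, convexity there lets the point itself serve as the node
on that side, with weight `1`; otherwise the nodes only need swapping. -/
theorem exists_sign_restricted_le_of_convexOn_Iic_Ici {f : ℝ → ℝ}
    (hneg : ConvexOn ℝ (Iic 0) f) (hpos : ConvexOn ℝ (Ici 0) f)
    {θ v w : ℝ} (hθ : θ ∈ Icc (0 : ℝ) 1) :
    ∃ θ' v' w' : ℝ, θ' ∈ Icc (0 : ℝ) 1 ∧ θ' * v' + (1 - θ') * w' = θ * v + (1 - θ) * w ∧
      0 ≤ v' ∧ w' ≤ 0 ∧ θ' * f v' + (1 - θ') * f w' ≤ θ * f v + (1 - θ) * f w := by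
  obtain ⟨hθ0, hθ1⟩ := hθ
  have hθ' : 0 ≤ 1 - θ := sub_nonneg.2 hθ1
  rcases le_total 0 v with hv | hv <;> rcases le_total 0 w with hw | hw
  · refine ⟨1, θ * v + (1 - θ) * w, 0, right_mem_Icc.2 zero_le_one, by ring, ?_, le_rfl, ?_⟩
    · have := mul_nonneg hθ0 hv; have := mul_nonneg hθ' hw; linarith
    · simpa using hpos.2 (mem_Ici.2 hv) (mem_Ici.2 hw) hθ0 hθ' (add_sub_cancel θ 1)
  · exact ⟨θ, v, w, ⟨hθ0, hθ1⟩, rfl, hv, hw, le_rfl⟩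
  · exact ⟨1 - θ, w, v, ⟨hθ', sub_le_self 1 hθ0⟩, by ring, hw, hv, by linarith⟩
  · refine ⟨0, 0, θ * v + (1 - θ) * w, left_mem_Icc.2 zero_le_one, by ring, le_rfl, ?_, ?_⟩
    · have := mul_nonpos_of_nonneg_of_nonpos hθ0 hv
      have := mul_nonpos_of_nonneg_of_nonpos hθ' hw; linarith
    · simpa using hneg.2 (mem_Iic.2 hv) (mem_Iic.2 hw) hθ0 hθ' (add_sub_cancel θ 1)

/-- If `f` is convex on each half-line, the convex envelope can be computed
using sign-restricted two-point combinations (`v ≥ 0`, `w ≤ 0`). -/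
theorem convex_envelope_sign_restricted (f : ℝ → ℝ)
    (hneg : ConvexOn ℝ (Set.Iic (0 : ℝ)) f) (hpos : ConvexOn ℝ (Set.Ici (0 : ℝ)) f)
    (x : ℝ) :
    sInf {y : EReal | ∃ θ v w : ℝ, θ ∈ Set.Icc (0 : ℝ) 1 ∧
        x = θ * v + (1 - θ) * w ∧ y = ((θ * f v + (1 - θ) * f w : ℝ) : EReal)}
      = sInf {y : EReal | ∃ θ v w : ℝ, θ ∈ Set.Icc (0 : ℝ) 1 ∧
          x = θ * v + (1 - θ) * w ∧ 0 ≤ v ∧ w ≤ 0 ∧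
          y = ((θ * f v + (1 - θ) * f w : ℝ) : EReal)} := by
  refine le_antisymm (sInf_le_sInf fun y ⟨θ, v, w, hθ, hx, _, _, hy⟩ ↦ ⟨θ, v, w, hθ, hx, hy⟩) ?_
  refine le_sInf fun y ⟨θ, v, w, hθ, hx, hy⟩ ↦ ?_
  obtain ⟨θ', v', w', hθ', hx', hv', hw', hle⟩ :=
    exists_sign_restricted_le_of_convexOn_Iic_Ici hneg hpos (v := v) (w := w) hθ
  subst hx hy
  exact sInf_le_of_le ⟨θ', v', w', hθ', hx'.symm, hv', hw', rfl⟩ (EReal.coe_le_coe_iff.2 hle)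
end

section
/- If for each i the gap between f_i and its convex envelope is bounded by δ_i ≥ 0 (i.e., 0 ≤ f_i(x) − f_i**(x) ≤ δ_i for all x), then the optimal values of the original and relaxed problems satisfy U⋆ ≤ U⋆_relax ≤ U⋆ + ∑_{i=1}^n δ_i, where U⋆ = sup_{u∈Ũ} [−f_0(u) − ∑_i f_i(u_i)] and U⋆_relax = sup_{u∈Ũ} [−f_0(u) − ∑_i f_i**(u_i)]. -/
theorem EReal.iSup_coe_le_iSup_coe_add {ι : Type*} {g h : ι → ℝ} {c : ℝ}
    (hgh : ∀ i, g i ≤ h i + c) :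
    ⨆ i, (g i : EReal) ≤ (⨆ i, (h i : EReal)) + c :=
  iSup_le fun i => calc
    (g i : EReal) ≤ (h i : EReal) + c := by exact_mod_cast hgh i
    _ ≤ (⨆ j, (h j : EReal)) + c := by gcongr; exact le_iSup (fun j => (h j : EReal)) i

theorem Finset.sum_le_sum_add_of_sub_le {ι : Type*} {s : Finset ι} {a b d : ι → ℝ}
    (h : ∀ i ∈ s, a i - b i ≤ d i) :
    ∑ i ∈ s, a i ≤ ∑ i ∈ s, b i + ∑ i ∈ s, d i := by
  rw [← Finset.sum_add_distrib]
  exact Finset.sum_le_sum fun i hi => by linarith [h i hi]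

theorem relaxation_gap_bound_general (n : ℕ) (Ut : Set (Fin n → ℝ))
    (f0 : (Fin n → ℝ) → ℝ) (f fenv : Fin n → ℝ → ℝ) (δ : Fin n → ℝ)
    (hle : ∀ i x, fenv i x ≤ f i x)
    (hgap : ∀ i x, f i x - fenv i x ≤ δ i) :
    (⨆ u : Ut, ((-f0 u.1 - ∑ i, f i (u.1 i) : ℝ) : EReal))
        ≤ (⨆ u : Ut, ((-f0 u.1 - ∑ i, fenv i (u.1 i) : ℝ) : EReal))
    ∧ (⨆ u : Ut, ((-f0 u.1 - ∑ i, fenv i (u.1 i) : ℝ) : EReal))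
        ≤ (⨆ u : Ut, ((-f0 u.1 - ∑ i, f i (u.1 i) : ℝ) : EReal))
            + ((∑ i, δ i : ℝ) : EReal) := by
  refine ⟨iSup_mono fun u => EReal.coe_le_coe_iff.2 ?_,
    EReal.iSup_coe_le_iSup_coe_add fun u => ?_⟩
  · exact sub_le_sub_left (Finset.sum_le_sum fun i _ => hle i (u.1 i)) _
  · have := Finset.sum_le_sum_add_of_sub_le (s := Finset.univ) fun i _ => hgap i (u.1 i)
    linarith

/-- If the envelope gaps are bounded by `δ_i`, then
`U⋆ ≤ U⋆_relax ≤ U⋆ + ∑ δ_i`. -/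
theorem relaxation_gap_bound (n : ℕ) (Ut : Set (Fin n → ℝ)) (hUt : Ut.Nonempty)
    (f0 : (Fin n → ℝ) → ℝ) (f fenv : Fin n → ℝ → ℝ) (δ : Fin n → ℝ)
    (hconv : ∀ i, ConvexOn ℝ Set.univ (fenv i))
    (hle : ∀ i x, fenv i x ≤ f i x)
    (hδ : ∀ i, 0 ≤ δ i)
    (hgap : ∀ i x, f i x - fenv i x ≤ δ i) :
    (⨆ u : Ut, ((-f0 u.1 - ∑ i, f i (u.1 i) : ℝ) : EReal))
        ≤ (⨆ u : Ut, ((-f0 u.1 - ∑ i, fenv i (u.1 i) : ℝ) : EReal))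
    ∧ (⨆ u : Ut, ((-f0 u.1 - ∑ i, fenv i (u.1 i) : ℝ) : EReal))
        ≤ (⨆ u : Ut, ((-f0 u.1 - ∑ i, f i (u.1 i) : ℝ) : EReal))
            + ((∑ i, δ i : ℝ) : EReal) :=
  relaxation_gap_bound_general n Ut f0 f fenv δ hle hgap
end
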